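/- arXiv:1310.4543 — 2 statements merged into one kernel-verified Lean document; each statement's English description precedes it below -/
import Mathlib

section
/- Let Π : ℝ → ℝ³ be a differentiable curve, 𝕀 a symmetric positive-definite real 3×3 matrix, Ω(t) := 𝕀⁻¹Π(t), and θ ∈ ℝ. Suppose Π satisfies the Casimir-dissipative rigid body equation Π'(t) = Π(t) × Ω(t) + θ (Π(t) × Ω(t)) × Ω(t) for all t. Then the rigid body energy is exactly preserved: the function t ↦ ½ Π(t)·𝕀⁻¹Π(t) is constant on ℝ. -/
/-!
Since `𝕀⁻¹` is symmetric, the energy `½ Π · 𝕀⁻¹Π` has derivative `Π' · Ω`, and both terms of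
`Π'` are cross products with `Ω` as right factor, hence orthogonal to `Ω`.
-/

open Matrix

section Derivatives

variable {m n : Type*} [Fintype n] {f g : ℝ → n → ℝ} {f' g' : n → ℝ} {t : ℝ}

theorem HasDerivAt.dotProduct (hf : HasDerivAt f f' t) (hg : HasDerivAt g g' t) :
    HasDerivAt (fun t => f t ⬝ᵥ g t) (f' ⬝ᵥ g t + f t ⬝ᵥ g') t := by
  simp only [_root_.dotProduct, ← Finset.sum_add_distrib]
  exact HasDerivAt.fun_sum fun i _ => (hasDerivAt_pi.mp hf i).mul (hasDerivAt_pi.mp hg i)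

theorem HasDerivAt.mulVec (A : Matrix m n ℝ) (hf : HasDerivAt f f' t) :
    HasDerivAt (fun t => A *ᵥ f t) (A *ᵥ f') t :=
  hasDerivAt_pi.mpr fun i => by
    simpa [Matrix.mulVec] using (hasDerivAt_const t (A i)).dotProduct hf

theorem HasDerivAt.dotProduct_mulVec_self {A : Matrix n n ℝ} (hA : A.IsSymm)
    (hf : HasDerivAt f f' t) :
    HasDerivAt (fun t => f t ⬝ᵥ A *ᵥ f t) (2 * (f' ⬝ᵥ A *ᵥ f t)) t := by
  convert hf.dotProduct (hf.mulVec A) using 1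
  rw [dotProduct_mulVec, ← mulVec_transpose, hA.eq, dotProduct_comm]
  ring

theorem dotProduct_mulVec_self_eq_of_forall_dotProduct_eq_zero {A : Matrix n n ℝ} (hA : A.IsSymm)
    {P V : ℝ → n → ℝ} (hP : ∀ t, HasDerivAt P (V t) t) (hV : ∀ t, V t ⬝ᵥ A *ᵥ P t = 0)
    (s t : ℝ) : P s ⬝ᵥ A *ᵥ P s = P t ⬝ᵥ A *ᵥ P t := by
  have hderiv : ∀ t, HasDerivAt (fun t => P t ⬝ᵥ A *ᵥ P t) 0 t := fun t => by
    simpa [hV t] using (hP t).dotProduct_mulVec_self hA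
  exact is_const_of_deriv_eq_zero (fun t => (hderiv t).differentiableAt)
    (fun t => (hderiv t).deriv) s t

end Derivatives

theorem cross_add_smul_cross_cross_dotProduct_self {R : Type*} [CommRing R] (v w : Fin 3 → R)
    (θ : R) : (v ⨯₃ w + θ • (v ⨯₃ w) ⨯₃ w) ⬝ᵥ w = 0 := by
  rw [add_dotProduct, smul_dotProduct, dotProduct_comm, dot_cross_self, dotProduct_comm,
    dot_cross_self, smul_zero, add_zero]

/-- A solution `Π` of the Casimir-dissipative rigid body equation
`Π' = Π × Ω + θ (Π × Ω) × Ω`, with `Ω = 𝕀⁻¹Π`, exactly preserves the rigid body energy: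
`t ↦ ½ Π·𝕀⁻¹Π` is constant on `ℝ`. -/
theorem statement12
    (I : Matrix (Fin 3) (Fin 3) ℝ) (hI : I.PosDef) (θ : ℝ)
    (P : ℝ → Fin 3 → ℝ) (Ω : ℝ → Fin 3 → ℝ)
    (hΩ : ∀ t : ℝ, Ω t = I⁻¹.mulVec (P t))
    (hP : ∀ t : ℝ,
      HasDerivAt P ((P t ⨯₃ Ω t) + θ • ((P t ⨯₃ Ω t) ⨯₃ Ω t)) t) :
    ∀ s t : ℝ,
      (1 / 2) * (P s ⬝ᵥ I⁻¹.mulVec (P s)) = (1 / 2) * (P t ⬝ᵥ I⁻¹.mulVec (P t)) := by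
  have hsymm : I⁻¹.IsSymm := (isHermitian_iff_isSymm.mp hI.isHermitian).inv
  intro s t
  rw [dotProduct_mulVec_self_eq_of_forall_dotProduct_eq_zero hsymm hP
    (fun t => by rw [← hΩ t, cross_add_smul_cross_cross_dotProduct_self]) s t]
end

section
/- Let ψ, B : ℝ³ → ℝ be smooth (C^∞) functions of (t, x, y), 1-periodic in x and in y, let θ ∈ ℝ, and set ω := −Δψ, ω̃ := ω + θ{ψ, B}, and B̃ := B + θ{ψ, ω}. Suppose the cross-anticipated equations for 2D incompressible MHD with magnetic field normal to the plane hold at every point: ∂_t ω + {ω̃, ψ} + {B̃, B} = 0 and ∂_t B + {B̃, ψ} = 0. Then for every t ∈ ℝ, the cross Casimir decays as: the function t ↦ ∫_{[0,1]²} ω(t, x, y) B(t, x, y) dx dy is differentiable with derivative − θ ∫_{[0,1]²} ( {ψ, B}(t, x, y)² + {ψ, ω}(t, x, y)² ) dx dy. -/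
open MeasureTheory

/-- Partial derivative in the time variable `t` of a function of `(t, x, y)`. -/
noncomputable def pdt (f : ℝ × ℝ × ℝ → ℝ) (p : ℝ × ℝ × ℝ) : ℝ :=
  deriv (fun s => f (s, p.2.1, p.2.2)) p.1

/-- Partial derivative in the first spatial variable `x`. -/
noncomputable def pdx (f : ℝ × ℝ × ℝ → ℝ) (p : ℝ × ℝ × ℝ) : ℝ :=
  deriv (fun s => f (p.1, s, p.2.2)) p.2.1

/-- Partial derivative in the second spatial variable `y`. -/
noncomputable def pdy (f : ℝ × ℝ × ℝ → ℝ) (p : ℝ × ℝ × ℝ) : ℝ :=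
  deriv (fun s => f (p.1, p.2.1, s)) p.2.2

/-- The canonical (Jacobian) bracket `{f, g} = ∂ₓf ∂_y g − ∂_y f ∂ₓ g` in the spatial
variables. -/
noncomputable def jacBracket (f g : ℝ × ℝ × ℝ → ℝ) (p : ℝ × ℝ × ℝ) : ℝ :=
  pdx f p * pdy g p - pdy f p * pdx g p

/-- The spatial Laplacian `Δ = ∂ₓ² + ∂_y²`. -/
noncomputable def spatialLap (f : ℝ × ℝ × ℝ → ℝ) (p : ℝ × ℝ × ℝ) : ℝ :=
  pdx (pdx f) p + pdy (pdy f) p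

/-!
Write `a = {ψ, B}`, `b = {ψ, ω}` and `E = ωB + θ(aB + bω)`. The Leibniz rule
`{fg, h} = f{g, h} + g{f, h}` and `{f, f} = 0` turn the two equations into the pointwise balance
`∂ₜ(ωB) = -θ(a² + b²) - {E, ψ} - θ{bB, B}`.
A bracket of spatially periodic functions has zero mean over the unit cell: by symmetry of second
derivatives `{f, g} = ∂ₓ(f ∂_y g) - ∂_y(f ∂ₓ g)`, and each term integrates to zero by Fubini and
the fundamental theorem of calculus. Differentiating under the integral sign gives the decay law.
-/

open Set

section Partials

variable {f g : ℝ × ℝ × ℝ → ℝ} {p : ℝ × ℝ × ℝ}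

lemma hasDerivAt_pdt_fderiv (hf : DifferentiableAt ℝ f p) :
    HasDerivAt (fun s => f (s, p.2.1, p.2.2)) (fderiv ℝ f p (1, 0, 0)) p.1 :=
  hf.hasFDerivAt.comp_hasDerivAt p.1
    ((hasDerivAt_id _).prodMk ((hasDerivAt_const _ _).prodMk (hasDerivAt_const _ _)))

lemma hasDerivAt_pdx_fderiv (hf : DifferentiableAt ℝ f p) :
    HasDerivAt (fun s => f (p.1, s, p.2.2)) (fderiv ℝ f p (0, 1, 0)) p.2.1 :=
  hf.hasFDerivAt.comp_hasDerivAt p.2.1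
    ((hasDerivAt_const _ _).prodMk ((hasDerivAt_id _).prodMk (hasDerivAt_const _ _)))

lemma hasDerivAt_pdy_fderiv (hf : DifferentiableAt ℝ f p) :
    HasDerivAt (fun s => f (p.1, p.2.1, s)) (fderiv ℝ f p (0, 0, 1)) p.2.2 :=
  hf.hasFDerivAt.comp_hasDerivAt p.2.2
    ((hasDerivAt_const _ _).prodMk ((hasDerivAt_const _ _).prodMk (hasDerivAt_id _)))

lemma pdt_eq_fderiv (hf : DifferentiableAt ℝ f p) : pdt f p = fderiv ℝ f p (1, 0, 0) :=
  (hasDerivAt_pdt_fderiv hf).deriv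

lemma pdx_eq_fderiv (hf : DifferentiableAt ℝ f p) : pdx f p = fderiv ℝ f p (0, 1, 0) :=
  (hasDerivAt_pdx_fderiv hf).deriv

lemma pdy_eq_fderiv (hf : DifferentiableAt ℝ f p) : pdy f p = fderiv ℝ f p (0, 0, 1) :=
  (hasDerivAt_pdy_fderiv hf).deriv

lemma hasDerivAt_pdt (hf : DifferentiableAt ℝ f p) :
    HasDerivAt (fun s => f (s, p.2.1, p.2.2)) (pdt f p) p.1 :=
  (hasDerivAt_pdt_fderiv hf).differentiableAt.hasDerivAt

lemma hasDerivAt_pdx (hf : DifferentiableAt ℝ f p) :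
    HasDerivAt (fun s => f (p.1, s, p.2.2)) (pdx f p) p.2.1 :=
  (hasDerivAt_pdx_fderiv hf).differentiableAt.hasDerivAt

lemma hasDerivAt_pdy (hf : DifferentiableAt ℝ f p) :
    HasDerivAt (fun s => f (p.1, p.2.1, s)) (pdy f p) p.2.2 :=
  (hasDerivAt_pdy_fderiv hf).differentiableAt.hasDerivAt

lemma pdt_mul (hf : DifferentiableAt ℝ f p) (hg : DifferentiableAt ℝ g p) :
    pdt (fun q => f q * g q) p = pdt f p * g p + f p * pdt g p :=
  ((hasDerivAt_pdt hf).mul (hasDerivAt_pdt hg)).deriv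

lemma pdx_add (hf : DifferentiableAt ℝ f p) (hg : DifferentiableAt ℝ g p) :
    pdx (fun q => f q + g q) p = pdx f p + pdx g p :=
  ((hasDerivAt_pdx hf).add (hasDerivAt_pdx hg)).deriv

lemma pdy_add (hf : DifferentiableAt ℝ f p) (hg : DifferentiableAt ℝ g p) :
    pdy (fun q => f q + g q) p = pdy f p + pdy g p :=
  ((hasDerivAt_pdy hf).add (hasDerivAt_pdy hg)).deriv

lemma pdx_mul (hf : DifferentiableAt ℝ f p) (hg : DifferentiableAt ℝ g p) :
    pdx (fun q => f q * g q) p = pdx f p * g p + f p * pdx g p :=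
  ((hasDerivAt_pdx hf).mul (hasDerivAt_pdx hg)).deriv

lemma pdy_mul (hf : DifferentiableAt ℝ f p) (hg : DifferentiableAt ℝ g p) :
    pdy (fun q => f q * g q) p = pdy f p * g p + f p * pdy g p :=
  ((hasDerivAt_pdy hf).mul (hasDerivAt_pdy hg)).deriv

lemma pdx_const_mul (c : ℝ) (hf : DifferentiableAt ℝ f p) :
    pdx (fun q => c * f q) p = c * pdx f p :=
  ((hasDerivAt_pdx hf).const_mul c).deriv

lemma pdy_const_mul (c : ℝ) (hf : DifferentiableAt ℝ f p) :
    pdy (fun q => c * f q) p = c * pdy f p :=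
  ((hasDerivAt_pdy hf).const_mul c).deriv

variable {m n : WithTop ℕ∞}

lemma contDiff_pdt (hf : ContDiff ℝ n f) (hmn : m + 1 ≤ n) : ContDiff ℝ m (pdt f) := by
  have hf' : Differentiable ℝ f := hf.differentiable (by rintro rfl; simp at hmn)
  simpa only [funext fun p => pdt_eq_fderiv (hf' p)] using
    (hf.fderiv_right hmn).clm_apply contDiff_const

lemma contDiff_pdx (hf : ContDiff ℝ n f) (hmn : m + 1 ≤ n) : ContDiff ℝ m (pdx f) := by
  have hf' : Differentiable ℝ f := hf.differentiable (by rintro rfl; simp at hmn)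
  simpa only [funext fun p => pdx_eq_fderiv (hf' p)] using
    (hf.fderiv_right hmn).clm_apply contDiff_const

lemma contDiff_pdy (hf : ContDiff ℝ n f) (hmn : m + 1 ≤ n) : ContDiff ℝ m (pdy f) := by
  have hf' : Differentiable ℝ f := hf.differentiable (by rintro rfl; simp at hmn)
  simpa only [funext fun p => pdy_eq_fderiv (hf' p)] using
    (hf.fderiv_right hmn).clm_apply contDiff_const

lemma contDiff_jacBracket (hf : ContDiff ℝ n f) (hg : ContDiff ℝ n g) (hmn : m + 1 ≤ n) :
    ContDiff ℝ m (jacBracket f g) :=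
  ((contDiff_pdx hf hmn).mul (contDiff_pdy hg hmn)).sub
    ((contDiff_pdy hf hmn).mul (contDiff_pdx hg hmn))

lemma continuous_jacBracket (hf : ContDiff ℝ 1 f) (hg : ContDiff ℝ 1 g) :
    Continuous (jacBracket f g) :=
  (contDiff_jacBracket (m := 0) hf hg le_rfl).continuous

lemma pdx_pdy_comm (hf : ContDiff ℝ 2 f) : pdx (pdy f) p = pdy (pdx f) p := by
  have hf1 : Differentiable ℝ f := hf.differentiable two_ne_zero
  have hf' : Differentiable ℝ (fderiv ℝ f) := (hf.fderiv_right le_rfl).differentiable one_ne_zero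
  have hpartial (v : ℝ × ℝ × ℝ) :
      HasFDerivAt (fun q => fderiv ℝ f q v)
        ((ContinuousLinearMap.apply ℝ ℝ v).comp (fderiv ℝ (fderiv ℝ f) p)) p :=
    (ContinuousLinearMap.apply ℝ ℝ v).hasFDerivAt.comp p (hf' p).hasFDerivAt
  rw [pdx_eq_fderiv ((contDiff_pdy hf le_rfl).differentiable one_ne_zero p),
    pdy_eq_fderiv ((contDiff_pdx hf le_rfl).differentiable one_ne_zero p),
    show pdy f = _ from funext fun q => pdy_eq_fderiv (hf1 q),
    show pdx f = _ from funext fun q => pdx_eq_fderiv (hf1 q),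
    (hpartial (0, 0, 1)).fderiv, (hpartial (0, 1, 0)).fderiv]
  exact hf.contDiffAt.isSymmSndFDerivAt (by simp) _ _

end Partials

section Bracket

variable {f g h : ℝ × ℝ × ℝ → ℝ} {p : ℝ × ℝ × ℝ}

lemma jacBracket_add_left (hf : DifferentiableAt ℝ f p) (hg : DifferentiableAt ℝ g p) :
    jacBracket (fun q => f q + g q) h p = jacBracket f h p + jacBracket g h p := by
  simp only [jacBracket, pdx_add hf hg, pdy_add hf hg]
  ring

lemma jacBracket_const_mul_left (c : ℝ) (hf : DifferentiableAt ℝ f p) :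
    jacBracket (fun q => c * f q) h p = c * jacBracket f h p := by
  simp only [jacBracket, pdx_const_mul c hf, pdy_const_mul c hf]
  ring

lemma jacBracket_mul_left (hf : DifferentiableAt ℝ f p) (hg : DifferentiableAt ℝ g p) :
    jacBracket (fun q => f q * g q) h p = jacBracket f h p * g p + f p * jacBracket g h p := by
  simp only [jacBracket, pdx_mul hf hg, pdy_mul hf hg]
  ring

end Bracket

theorem pdt_mul_of_crossAnticipated {ψ B ω : ℝ × ℝ × ℝ → ℝ} {θ : ℝ} {p : ℝ × ℝ × ℝ}
    (hψ : ContDiff ℝ 2 ψ) (hB : ContDiff ℝ 2 B) (hω : ContDiff ℝ 2 ω)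
    (h₁ : pdt ω p + jacBracket (fun q => ω q + θ * jacBracket ψ B q) ψ p
      + jacBracket (fun q => B q + θ * jacBracket ψ ω q) B p = 0)
    (h₂ : pdt B p + jacBracket (fun q => B q + θ * jacBracket ψ ω q) ψ p = 0) :
    pdt (fun q => ω q * B q) p = -θ * (jacBracket ψ B p ^ 2 + jacBracket ψ ω p ^ 2)
      - jacBracket (fun q => ω q * B q + θ * (jacBracket ψ B q * B q + jacBracket ψ ω q * ω q))
          ψ p
      - θ * jacBracket (fun q => jacBracket ψ ω q * B q) B p := by
  have hB' : Differentiable ℝ B := hB.differentiable two_ne_zero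
  have hω' : Differentiable ℝ ω := hω.differentiable two_ne_zero
  have ha : Differentiable ℝ (jacBracket ψ B) :=
    (contDiff_jacBracket hψ hB le_rfl).differentiable one_ne_zero
  have hb : Differentiable ℝ (jacBracket ψ ω) :=
    (contDiff_jacBracket hψ hω le_rfl).differentiable one_ne_zero
  rw [pdt_mul (hω' p) (hB' p)]
  simp (disch := fun_prop) only [jacBracket_add_left, jacBracket_const_mul_left,
    jacBracket_mul_left] at h₁ h₂ ⊢
  simp only [jacBracket] at h₁ h₂ ⊢
  linear_combination B p * h₁ + ω p * h₂

structure IsSpatiallyPeriodic (f : ℝ × ℝ × ℝ → ℝ) : Prop where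
  add_one_x : ∀ t x y : ℝ, f (t, x + 1, y) = f (t, x, y)
  add_one_y : ∀ t x y : ℝ, f (t, x, y + 1) = f (t, x, y)

namespace IsSpatiallyPeriodic

variable {f g : ℝ × ℝ × ℝ → ℝ}

lemma add (hf : IsSpatiallyPeriodic f) (hg : IsSpatiallyPeriodic g) :
    IsSpatiallyPeriodic fun p => f p + g p :=
  ⟨fun t x y => by rw [hf.add_one_x, hg.add_one_x], fun t x y => by rw [hf.add_one_y, hg.add_one_y]⟩

lemma sub (hf : IsSpatiallyPeriodic f) (hg : IsSpatiallyPeriodic g) :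
    IsSpatiallyPeriodic fun p => f p - g p :=
  ⟨fun t x y => by rw [hf.add_one_x, hg.add_one_x], fun t x y => by rw [hf.add_one_y, hg.add_one_y]⟩

lemma mul (hf : IsSpatiallyPeriodic f) (hg : IsSpatiallyPeriodic g) :
    IsSpatiallyPeriodic fun p => f p * g p :=
  ⟨fun t x y => by rw [hf.add_one_x, hg.add_one_x], fun t x y => by rw [hf.add_one_y, hg.add_one_y]⟩

lemma const_mul (hf : IsSpatiallyPeriodic f) (c : ℝ) : IsSpatiallyPeriodic fun p => c * f p :=
  ⟨fun t x y => by rw [hf.add_one_x], fun t x y => by rw [hf.add_one_y]⟩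

lemma neg (hf : IsSpatiallyPeriodic f) : IsSpatiallyPeriodic fun p => -f p :=
  ⟨fun t x y => by rw [hf.add_one_x], fun t x y => by rw [hf.add_one_y]⟩

lemma pdx (hf : IsSpatiallyPeriodic f) : IsSpatiallyPeriodic (pdx f) where
  add_one_x t x y := by
    simp only [_root_.pdx, ← deriv_comp_add_const, hf.add_one_x]
  add_one_y t x y := by
    simp only [_root_.pdx, hf.add_one_y]

lemma pdy (hf : IsSpatiallyPeriodic f) : IsSpatiallyPeriodic (pdy f) where
  add_one_x t x y := by
    simp only [_root_.pdy, hf.add_one_x]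
  add_one_y t x y := by
    simp only [_root_.pdy, ← deriv_comp_add_const, hf.add_one_y]

lemma jacBracket (hf : IsSpatiallyPeriodic f) (hg : IsSpatiallyPeriodic g) :
    IsSpatiallyPeriodic (jacBracket f g) :=
  (hf.pdx.mul hg.pdy).sub (hf.pdy.mul hg.pdx)

end IsSpatiallyPeriodic

noncomputable def cellIntegral (f : ℝ × ℝ × ℝ → ℝ) (t : ℝ) : ℝ :=
  ∫ q in Icc (0 : ℝ) 1 ×ˢ Icc (0 : ℝ) 1, f (t, q.1, q.2)

section CellIntegral

variable {f g : ℝ × ℝ × ℝ → ℝ} {p : ℝ × ℝ × ℝ}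

lemma integrableOn_cell (hf : Continuous f) (t : ℝ) :
    IntegrableOn (fun q : ℝ × ℝ => f (t, q.1, q.2)) (Icc (0 : ℝ) 1 ×ˢ Icc (0 : ℝ) 1) :=
  (hf.comp (by fun_prop)).continuousOn.integrableOn_compact (isCompact_Icc.prod isCompact_Icc)

lemma cellIntegral_sub (hf : Continuous f) (hg : Continuous g) (t : ℝ) :
    cellIntegral (fun p => f p - g p) t = cellIntegral f t - cellIntegral g t :=
  integral_sub (integrableOn_cell hf t) (integrableOn_cell hg t)

lemma cellIntegral_const_mul (c : ℝ) (f : ℝ × ℝ × ℝ → ℝ) (t : ℝ) :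
    cellIntegral (fun p => c * f p) t = c * cellIntegral f t :=
  integral_const_mul c _

lemma integral_Icc_deriv_eq_zero {u : ℝ → ℝ} {a b : ℝ} (hu : ContDiff ℝ 1 u) (hab : a ≤ b)
    (h : u b = u a) : ∫ x in Icc a b, deriv u x = 0 := by
  rw [integral_Icc_eq_integral_Ioc, ← intervalIntegral.integral_of_le hab,
    intervalIntegral.integral_deriv_eq_sub (fun x _ => hu.differentiable one_ne_zero x)
      ((hu.continuous_deriv le_rfl).intervalIntegrable a b), h, sub_self]

lemma cellIntegral_pdx_eq_zero (hf : ContDiff ℝ 1 f) (hper : IsSpatiallyPeriodic f) (t : ℝ) :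
    cellIntegral (pdx f) t = 0 := by
  have hint := integrableOn_cell (contDiff_pdx (m := 0) hf le_rfl).continuous t
  have hzero (y : ℝ) : ∫ x in Icc (0 : ℝ) 1, pdx f (t, x, y) = 0 :=
    integral_Icc_deriv_eq_zero (u := fun s => f (t, s, y)) (by fun_prop) zero_le_one
      (by simpa using hper.add_one_x t 0 y)
  rw [Measure.volume_eq_prod] at hint
  rw [cellIntegral, Measure.volume_eq_prod, setIntegral_prod _ hint,
    integral_integral_swap (by rwa [Measure.prod_restrict])]
  simp only [hzero, integral_zero]

lemma cellIntegral_pdy_eq_zero (hf : ContDiff ℝ 1 f) (hper : IsSpatiallyPeriodic f) (t : ℝ) :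
    cellIntegral (pdy f) t = 0 := by
  have hint := integrableOn_cell (contDiff_pdy (m := 0) hf le_rfl).continuous t
  have hzero (x : ℝ) : ∫ y in Icc (0 : ℝ) 1, pdy f (t, x, y) = 0 :=
    integral_Icc_deriv_eq_zero (u := fun s => f (t, x, s)) (by fun_prop) zero_le_one
      (by simpa using hper.add_one_y t x 0)
  rw [Measure.volume_eq_prod] at hint
  rw [cellIntegral, Measure.volume_eq_prod, setIntegral_prod _ hint]
  simp only [hzero, integral_zero]

lemma jacBracket_eq_pdx_sub_pdy (hf : DifferentiableAt ℝ f p) (hg : ContDiff ℝ 2 g) :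
    jacBracket f g p = pdx (fun q => f q * pdy g q) p - pdy (fun q => f q * pdx g q) p := by
  rw [pdx_mul hf ((contDiff_pdy hg le_rfl).differentiable one_ne_zero p),
    pdy_mul hf ((contDiff_pdx hg le_rfl).differentiable one_ne_zero p), pdx_pdy_comm hg,
    jacBracket]
  ring

lemma cellIntegral_jacBracket_eq_zero (hf : ContDiff ℝ 1 f) (hg : ContDiff ℝ 2 g)
    (hfp : IsSpatiallyPeriodic f) (hgp : IsSpatiallyPeriodic g) (t : ℝ) :
    cellIntegral (jacBracket f g) t = 0 := by
  have hu : ContDiff ℝ 1 fun q => f q * pdy g q := hf.mul (contDiff_pdy hg le_rfl)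
  have hv : ContDiff ℝ 1 fun q => f q * pdx g q := hf.mul (contDiff_pdx hg le_rfl)
  rw [show jacBracket f g = _ from
      funext fun p => jacBracket_eq_pdx_sub_pdy (hf.differentiable one_ne_zero p) hg,
    cellIntegral_sub (contDiff_pdx (m := 0) hu le_rfl).continuous
      (contDiff_pdy (m := 0) hv le_rfl).continuous,
    cellIntegral_pdx_eq_zero hu (hfp.mul hgp.pdy), cellIntegral_pdy_eq_zero hv (hfp.mul hgp.pdx),
    sub_self]

lemma hasDerivAt_cellIntegral (hf : ContDiff ℝ 1 f) (t : ℝ) :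
    HasDerivAt (cellIntegral f) (cellIntegral (pdt f) t) t := by
  have hK : IsCompact (Icc (t - 1) (t + 1) ×ˢ (Icc (0 : ℝ) 1 ×ˢ Icc (0 : ℝ) 1)) :=
    isCompact_Icc.prod (isCompact_Icc.prod isCompact_Icc)
  have hpdt : Continuous (pdt f) := (contDiff_pdt (m := 0) hf le_rfl).continuous
  obtain ⟨C, hC⟩ := hK.exists_bound_of_continuousOn
    (f := fun r : ℝ × ℝ × ℝ => pdt f (r.1, r.2.1, r.2.2)) (by fun_prop)
  refine (hasDerivAt_integral_of_dominated_loc_of_deriv_le (s := Icc (t - 1) (t + 1))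
    (bound := fun _ => C)
    (Icc_mem_nhds (by linarith) (by linarith))
    (.of_forall fun s => (integrableOn_cell hf.continuous s).aestronglyMeasurable)
    (integrableOn_cell hf.continuous t) (integrableOn_cell hpdt t).aestronglyMeasurable
    ?_ (integrableOn_const (isCompact_Icc.prod isCompact_Icc).measure_lt_top.ne)
    (.of_forall fun q s _ =>
      hasDerivAt_pdt (p := (s, q.1, q.2)) (hf.differentiable one_ne_zero _))).2
  filter_upwards [ae_restrict_mem (measurableSet_Icc.prod measurableSet_Icc)] with q hq s hs
  exact hC (s, q) ⟨hs, hq⟩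

end CellIntegral

theorem cellIntegral_pdt_mul_of_crossAnticipated {ψ B ω : ℝ × ℝ × ℝ → ℝ} {θ : ℝ}
    (hψ : ContDiff ℝ 2 ψ) (hB : ContDiff ℝ 2 B) (hω : ContDiff ℝ 2 ω)
    (hψp : IsSpatiallyPeriodic ψ) (hBp : IsSpatiallyPeriodic B) (hωp : IsSpatiallyPeriodic ω)
    (h₁ : ∀ p, pdt ω p + jacBracket (fun q => ω q + θ * jacBracket ψ B q) ψ p
      + jacBracket (fun q => B q + θ * jacBracket ψ ω q) B p = 0)
    (h₂ : ∀ p, pdt B p + jacBracket (fun q => B q + θ * jacBracket ψ ω q) ψ p = 0) (t : ℝ) :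
    cellIntegral (pdt fun q => ω q * B q) t
      = -(θ * cellIntegral (fun q => jacBracket ψ B q ^ 2 + jacBracket ψ ω q ^ 2) t) := by
  have ha : ContDiff ℝ 1 (jacBracket ψ B) := contDiff_jacBracket hψ hB le_rfl
  have hb : ContDiff ℝ 1 (jacBracket ψ ω) := contDiff_jacBracket hψ hω le_rfl
  have hψ₁ : ContDiff ℝ 1 ψ := hψ.of_le one_le_two
  have hB₁ : ContDiff ℝ 1 B := hB.of_le one_le_two
  have hω₁ : ContDiff ℝ 1 ω := hω.of_le one_le_two
  set E := fun q => ω q * B q + θ * (jacBracket ψ B q * B q + jacBracket ψ ω q * ω q)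
  set F := fun q => jacBracket ψ ω q * B q
  have hE : ContDiff ℝ 1 E := by fun_prop
  have hF : ContDiff ℝ 1 F := by fun_prop
  have hEψ := continuous_jacBracket hE hψ₁
  have hFB := continuous_jacBracket hF hB₁
  have hEψ₀ : cellIntegral (jacBracket E ψ) t = 0 :=
    cellIntegral_jacBracket_eq_zero hE hψ
      ((hωp.mul hBp).add ((((hψp.jacBracket hBp).mul hBp).add
        ((hψp.jacBracket hωp).mul hωp)).const_mul θ)) hψp t
  have hFB₀ : cellIntegral (jacBracket F B) t = 0 :=
    cellIntegral_jacBracket_eq_zero hF hB ((hψp.jacBracket hωp).mul hBp) hBp t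
  rw [show (pdt fun q => ω q * B q) = _ from
      funext fun p => pdt_mul_of_crossAnticipated hψ hB hω (h₁ p) (h₂ p),
    cellIntegral_sub (by fun_prop) (by fun_prop), cellIntegral_sub (by fun_prop) hEψ,
    cellIntegral_const_mul, cellIntegral_const_mul, hEψ₀, hFB₀]
  ring

/-- For smooth, spatially `1`-periodic solutions of the cross-anticipated
equations of 2D incompressible MHD with `𝐁 = B ẑ` normal to the plane:
`∂ₜω + {ω̃, ψ} + {B̃, B} = 0`, `∂ₜB + {B̃, ψ} = 0`, where `ω = −Δψ`, `ω̃ = ω + θ{ψ, B}`,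
`B̃ = B + θ{ψ, ω}`, the cross Casimir `∫ ω B` decays at the rate
`d/dt ∫ ω B = −θ ∫ ({ψ, B}² + {ψ, ω}²)` (integrals over the unit square). -/
theorem statement17
    (ψ B : ℝ × ℝ × ℝ → ℝ) (θ : ℝ)
    (hψ : ContDiff ℝ (⊤ : ℕ∞) ψ) (hB : ContDiff ℝ (⊤ : ℕ∞) B)
    (hψx : ∀ t x y : ℝ, ψ (t, x + 1, y) = ψ (t, x, y))
    (hψy : ∀ t x y : ℝ, ψ (t, x, y + 1) = ψ (t, x, y))
    (hBx : ∀ t x y : ℝ, B (t, x + 1, y) = B (t, x, y))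
    (hBy : ∀ t x y : ℝ, B (t, x, y + 1) = B (t, x, y))
    (ω ωtil Btil : ℝ × ℝ × ℝ → ℝ)
    (hω : ω = fun p => -spatialLap ψ p)
    (hωtil : ωtil = fun p => ω p + θ * jacBracket ψ B p)
    (hBtil : Btil = fun p => B p + θ * jacBracket ψ ω p)
    (heq1 : ∀ p : ℝ × ℝ × ℝ, pdt ω p + jacBracket ωtil ψ p + jacBracket Btil B p = 0)
    (heq2 : ∀ p : ℝ × ℝ × ℝ, pdt B p + jacBracket Btil ψ p = 0) :
    ∀ t : ℝ,
      HasDerivAt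
        (fun s => ∫ q in Set.Icc (0 : ℝ) 1 ×ˢ Set.Icc (0 : ℝ) 1,
          ω (s, q.1, q.2) * B (s, q.1, q.2))
        (-(θ * ∫ q in Set.Icc (0 : ℝ) 1 ×ˢ Set.Icc (0 : ℝ) 1,
            ((jacBracket ψ B (t, q.1, q.2)) ^ 2 + (jacBracket ψ ω (t, q.1, q.2)) ^ 2))) t := by
  intro t
  subst hωtil hBtil
  have two_le : (2 : WithTop ℕ∞) ≤ (⊤ : ℕ∞) := by norm_cast
  have hψp : IsSpatiallyPeriodic ψ := ⟨hψx, hψy⟩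
  have hBp : IsSpatiallyPeriodic B := ⟨hBx, hBy⟩
  have hωC : ContDiff ℝ (⊤ : ℕ∞) ω := hω ▸
    ((contDiff_pdx (contDiff_pdx hψ le_rfl) le_rfl).add
      (contDiff_pdy (contDiff_pdy hψ le_rfl) le_rfl)).neg
  have hωp : IsSpatiallyPeriodic ω := hω ▸ (hψp.pdx.pdx.add hψp.pdy.pdy).neg
  have hderiv := hasDerivAt_cellIntegral ((hωC.mul hB).of_le (one_le_two.trans two_le)) t
  rwa [cellIntegral_pdt_mul_of_crossAnticipated (hψ.of_le two_le) (hB.of_le two_le)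
    (hωC.of_le two_le) hψp hBp hωp heq1 heq2] at hderiv
end
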